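/- Let M be a qDTMC, Φ1, Φ2 negation-free state formulas, and θ ∈ [0,1]. The formula Pr_{≥θ}(Φ1 U Φ2) (unbounded until) evaluates to T in the qDTMC M (i.e., µ{π ∈ Path(s_init) : (π, Φ1 U Φ2) = T in M} ≥ θ) if and only if s_init satisfies Pr_{≥θ}(Φ1 U Φ2) under standard two-valued PCTL semantics in the binary DTMC M^(1) obtained from M by relabeling every ? to F. -/
import Mathlib


open MeasureTheory

/-- Three truth values: `F` (false), `Q` (unknown, "?"), `T` (true). -/
inductive TV : Type
  | F : TV
  | Q : TV
  | T : TV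
  deriving DecidableEq

namespace TV

/-- Kleene's strong three-valued negation. -/
def not : TV → TV
  | T => F
  | Q => Q
  | F => T

/-- Kleene's strong three-valued conjunction (min w.r.t. F < ? < T). -/
def and : TV → TV → TV
  | T, x => x
  | Q, T => Q
  | Q, Q => Q
  | Q, F => F
  | F, _ => F

/-- Kleene's strong three-valued disjunction (max w.r.t. F < ? < T). -/
def or : TV → TV → TV
  | T, _ => T
  | Q, T => T
  | Q, Q => Q
  | Q, F => Q
  | F, x => x

end TV

/-- Negation-free state formulas: built from atomic propositions and the
constants T, F using ∧ and ∨. -/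
inductive SForm (AP : Type) : Type
  | tt : SForm AP
  | ff : SForm AP
  | atom : AP → SForm AP
  | and : SForm AP → SForm AP → SForm AP
  | or : SForm AP → SForm AP → SForm AP

/-- Three-valued (Kleene) evaluation of a negation-free state formula in a state,
given a three-valued labeling `L`. -/
def sEval {S AP : Type} (L : S → AP → TV) : SForm AP → S → TV
  | SForm.tt, _ => TV.T
  | SForm.ff, _ => TV.F
  | SForm.atom a, s => L s a
  | SForm.and φ ψ, s => (sEval L φ s).and (sEval L ψ s)
  | SForm.or φ ψ, s => (sEval L φ s).or (sEval L ψ s)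

/-- Standard two-valued evaluation of a state formula in a binary DTMC
with (two-valued) labeling `Lb`. -/
def sSat {S AP : Type} (Lb : S → AP → Prop) : SForm AP → S → Prop
  | SForm.tt, _ => True
  | SForm.ff, _ => False
  | SForm.atom a, s => Lb s a
  | SForm.and φ ψ, s => sSat Lb φ s ∧ sSat Lb ψ s
  | SForm.or φ ψ, s => sSat Lb φ s ∨ sSat Lb ψ s

/-- A qDTMC: a DTMC with three-valued labeling.  The transition function takes
values in [0,1] (here: `NNReal`, with each row summing to 1, hence each entry ≤ 1). -/
structure qDTMC (S AP : Type) [Fintype S] : Type where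
  P : S → S → NNReal
  stoch : ∀ s : S, (∑ s' : S, P s s') = 1
  init : S
  L : S → AP → TV

namespace qDTMC

variable {S AP : Type} [Fintype S]

/-- `π` is a path of `M` starting at `s`. -/
def IsPath (M : qDTMC S AP) (s : S) (π : ℕ → S) : Prop :=
  π 0 = s ∧ ∀ i : ℕ, 0 < M.P (π i) (π (i + 1))

/-- The binary labeling of M⁽¹⁾: every `?` is relabeled to false. -/
def L1 (M : qDTMC S AP) : S → AP → Prop := fun s a => M.L s a = TV.T

/-- The binary labeling of M⁽²⁾: every `?` is relabeled to true. -/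
def L2 (M : qDTMC S AP) : S → AP → Prop := fun s a => M.L s a ≠ TV.F

/-- `μ` is the probability measure on paths of `M` from `s`, determined on cylinder
sets by the products of transition probabilities. -/
def IsPathMeasure [MeasurableSpace S] (M : qDTMC S AP) (s : S)
    (μ : Measure (ℕ → S)) : Prop :=
  IsProbabilityMeasure μ ∧
  ∀ (n : ℕ) (ω : ℕ → S), ω 0 = s →
    μ {π : ℕ → S | ∀ i ≤ n, π i = ω i} =
      ∏ i ∈ Finset.range n, (M.P (ω i) (ω (i + 1)) : ENNReal)

end qDTMC

/-- Path formulas: X Φ, Φ₁ U^{≤k} Φ₂ and Φ₁ U Φ₂ over negation-free state formulas. -/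
inductive PForm (AP : Type) : Type
  | next : SForm AP → PForm AP
  | buntil : SForm AP → ℕ → SForm AP → PForm AP
  | uuntil : SForm AP → SForm AP → PForm AP

open Classical in
/-- Three-valued evaluation of a path formula on a path `π`. -/
noncomputable def pEval {S AP : Type} (L : S → AP → TV) : PForm AP → (ℕ → S) → TV
  | PForm.next Φ, π => sEval L Φ (π 1)
  | PForm.buntil Φ1 k Φ2, π =>
      if ∃ i ≤ k, sEval L Φ2 (π i) = TV.T ∧ ∀ i' < i, sEval L Φ1 (π i') = TV.T then TV.T
      else if (∀ i ≤ k, sEval L Φ2 (π i) = TV.F) ∨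
          (∃ i ≤ k, sEval L Φ2 (π i) ≠ TV.F ∧ ∃ i' < i, sEval L Φ1 (π i') = TV.F) then TV.F
      else TV.Q
  | PForm.uuntil Φ1 Φ2, π =>
      if ∃ i, sEval L Φ2 (π i) = TV.T ∧ ∀ i' < i, sEval L Φ1 (π i') = TV.T then TV.T
      else if (∀ i, sEval L Φ2 (π i) = TV.F) ∨
          (∃ i, sEval L Φ2 (π i) ≠ TV.F ∧ ∃ i' < i, sEval L Φ1 (π i') = TV.F) then TV.F
      else TV.Q

/-- Standard two-valued PCTL path satisfaction in a binary DTMC with labeling `Lb`. -/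
def pSat {S AP : Type} (Lb : S → AP → Prop) : PForm AP → (ℕ → S) → Prop
  | PForm.next Φ, π => sSat Lb Φ (π 1)
  | PForm.buntil Φ1 k Φ2, π => ∃ i ≤ k, sSat Lb Φ2 (π i) ∧ ∀ i' < i, sSat Lb Φ1 (π i')
  | PForm.uuntil Φ1 Φ2, π => ∃ i, sSat Lb Φ2 (π i) ∧ ∀ i' < i, sSat Lb Φ1 (π i')


lemma sSat_L1_iff {S AP : Type} [Fintype S] (M : qDTMC S AP) (Φ : SForm AP) (s : S) :
    sSat M.L1 Φ s ↔ sEval M.L Φ s = TV.T := by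
  induction Φ with
  | tt => simp [sSat, sEval]
  | ff => simp [sSat, sEval]
  | atom a => simp [sSat, sEval, qDTMC.L1]
  | and φ ψ ihφ ihψ =>
      simp only [sSat, sEval, ihφ, ihψ]
      cases h1 : sEval M.L φ s <;> cases h2 : sEval M.L ψ s <;> simp [TV.and]
  | or φ ψ ihφ ihψ =>
      simp only [sSat, sEval, ihφ, ihψ]
      cases h1 : sEval M.L φ s <;> cases h2 : sEval M.L ψ s <;> simp [TV.or]

/-- Pr_{≥θ}(Φ1 U Φ2) evaluates to T in the qDTMC M iff s_init satisfies it in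
the binary DTMC M⁽¹⁾ (every ? relabeled to F). -/
theorem stmt7 {S AP : Type} [Fintype S] [Nonempty S] [Fintype AP]
    [MeasurableSpace S] [DiscreteMeasurableSpace S]
    (M : qDTMC S AP) (μ : Measure (ℕ → S)) (hμ : M.IsPathMeasure M.init μ)
    (Φ1 Φ2 : SForm AP) (θ : ℝ) (hθ : θ ∈ Set.Icc (0 : ℝ) 1) :
    ENNReal.ofReal θ ≤ μ {π : ℕ → S | M.IsPath M.init π ∧ pEval M.L (PForm.uuntil Φ1 Φ2) π = TV.T} ↔
      ENNReal.ofReal θ ≤ μ {π : ℕ → S | M.IsPath M.init π ∧ pSat M.L1 (PForm.uuntil Φ1 Φ2) π} := by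
  have hset : {π : ℕ → S | M.IsPath M.init π ∧ pEval M.L (PForm.uuntil Φ1 Φ2) π = TV.T} =
      {π : ℕ → S | M.IsPath M.init π ∧ pSat M.L1 (PForm.uuntil Φ1 Φ2) π} := by
    ext π
    simp only [Set.mem_setOf_eq, and_congr_right_iff]
    intro _
    constructor
    · intro h
      simp only [pEval] at h
      by_cases hc : ∃ i, sEval M.L Φ2 (π i) = TV.T ∧ ∀ i' < i, sEval M.L Φ1 (π i') = TV.T
      · obtain ⟨i, h2, h1⟩ := hc
        exact ⟨i, (sSat_L1_iff M Φ2 (π i)).2 h2, fun i' hi' => (sSat_L1_iff M Φ1 (π i')).2 (h1 i' hi')⟩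
      · rw [if_neg hc] at h
        split at h <;> simp_all
    · rintro ⟨i, h2, h1⟩
      simp only [pEval]
      rw [if_pos ⟨i, (sSat_L1_iff M Φ2 (π i)).1 h2, fun i' hi' => (sSat_L1_iff M Φ1 (π i')).1 (h1 i' hi')⟩]
  rw [hset]
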